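/- Let G be a constraint graph with order ≺ and β : V → {1,2}. If u,v,w ∈ V satisfy u ≠ v, u ≺ w and v ≺ w, then δ(u,v) ≤ δ(u,w) + δ(v,w) − 2β(w) + 2 (where the inequality holds trivially if δ(u,w) = ∞ or δ(v,w) = ∞). -/
import Mathlib


namespace CountingCSP

/-! ## The basic framework

An instance `Ψ` of `{1,2}`-CSP is modelled by a number `m` of variables, the variable set
being `Fin m` with its natural linear order `<` (the order of quantification `≺`), a function
`β : Fin m → ℕ` taking values in `{1,2}` (variable `v` is quantified by `∃^{≥ β v}`), and a
simple graph `G` on `Fin m` (the constraint graph).  A target graph is a type `B` together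
with an adjacency relation `E : B → B → Prop` (loops allowed in general). -/

/-- Adjacency of the finite path `P_n` on the vertices `{1,…,n}`, modelled as `Fin n`. -/
def pathAdj (n : ℕ) (i j : Fin n) : Prop :=
  (i : ℕ) + 1 = j ∨ (j : ℕ) + 1 = i

/-- Adjacency of the infinite path `P_∞` on `ℤ`: `i` and `j` adjacent iff `|i - j| = 1`. -/
def intPathAdj (i j : ℤ) : Prop := |i - j| = 1

/-- `SatFrom β G E i f` : processing the variables of the instance in `≺`-increasing order
starting from variable `i`, where the earlier variables have been assigned according to `f`,
the instance can be satisfied.  At each variable `v` one asks for a set `S` of `β v` distinct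
elements of the target such that for every `b ∈ S` the rest of the instance can be satisfied
with `v ↦ b`; when all variables are assigned, the assignment must be a homomorphism. -/
def SatFrom {m : ℕ} {B : Type*} (β : Fin m → ℕ) (G : SimpleGraph (Fin m))
    (E : B → B → Prop) (i : ℕ) (f : Fin m → B) : Prop :=
  if h : i < m then
    ∃ S : Finset B, S.card = β ⟨i, h⟩ ∧
      ∀ b ∈ S, SatFrom β G E (i + 1) (Function.update f ⟨i, h⟩ b)
  else ∀ u v : Fin m, G.Adj u v → E (f u) (f v)
termination_by m - i
decreasing_by omega

/-- `Sat β G E` : the instance with quantifiers `β` and constraint graph `G` is satisfied by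
the target graph with adjacency `E`  (i.e. `H ⊨ Ψ`).  The initial assignment is irrelevant
since every variable is assigned before it is used. -/
def Sat {m : ℕ} {B : Type*} (β : Fin m → ℕ) (G : SimpleGraph (Fin m))
    (E : B → B → Prop) : Prop :=
  ∀ f : Fin m → B, SatFrom β G E 0 f

/-- A graph is bipartite iff it has a proper 2-colouring. -/
def Bipartite {V : Type*} (G : SimpleGraph V) : Prop :=
  ∃ c : V → Bool, ∀ u v, G.Adj u v → c u ≠ c v

/-! ## Walks, looping walks, and the distance function δ -/

/-- `λ(Q) = |Q| − 2·∑_{interior vertices x of Q} (β x − 1)`, where `|Q|` is the length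
(number of edges) of the walk `Q = x₁,…,x_r`, and the interior vertices are `x₂,…,x_{r−1}`. -/
def lamWalk {m : ℕ} (β : Fin m → ℕ) (Q : List (Fin m)) : ℤ :=
  ((Q.length : ℤ) - 1) - 2 * (((Q.drop 1).dropLast).map (fun x => (β x : ℤ) - 1)).sum

/-- Looping walks of `G` (with respect to the quantification order `<` on `Fin m`):
a walk `x₁,…,x_r` with `x₁ ≠ x_r` such that if `r ≥ 3` then both endpoints strictly precede
every interior vertex and the walk splits at some interior position into two looping walks. -/
inductive IsLoopingWalk {m : ℕ} (G : SimpleGraph (Fin m)) : List (Fin m) → Prop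
  | base {x y : Fin m} : G.Adj x y → IsLoopingWalk G [x, y]
  | comb {x y z : Fin m} {Q₁ Q₂ : List (Fin m)} :
      IsLoopingWalk G (x :: (Q₁ ++ [y])) →
      IsLoopingWalk G (y :: (Q₂ ++ [z])) →
      x ≠ z →
      (∀ w ∈ Q₁ ++ y :: Q₂, x < w ∧ z < w) →
      IsLoopingWalk G (x :: (Q₁ ++ y :: Q₂ ++ [z]))

/-- `Q` is a looping walk between `u` and `v` (in either direction). -/
def LoopingWalkBetween {m : ℕ} (G : SimpleGraph (Fin m)) (u v : Fin m)
    (Q : List (Fin m)) : Prop :=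
  IsLoopingWalk G Q ∧
    ((Q.head? = some u ∧ Q.getLast? = some v) ∨ (Q.head? = some v ∧ Q.getLast? = some u))

/-- `IsDelta G β u v d` : `d = δ(u,v)`, i.e. `d` is the minimum of `λ(Q)` over all looping
walks `Q` of `G` between `u` and `v`.  (`δ(u,v) < ∞` corresponds to `∃ d, IsDelta G β u v d`.) -/
def IsDelta {m : ℕ} (G : SimpleGraph (Fin m)) (β : Fin m → ℕ) (u v : Fin m) (d : ℤ) : Prop :=
  (∃ Q, LoopingWalkBetween G u v Q ∧ lamWalk β Q = d) ∧
    ∀ Q, LoopingWalkBetween G u v Q → d ≤ lamWalk β Q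

/-! ## The functions γ and γ′ -/

/-- `IsGammaVal G β g v t` : `t = max(0, max_{u ≺ v, δ(u,v) < ∞} (g u − δ(u,v) + β v − 1))`. -/
def IsGammaVal {m : ℕ} (G : SimpleGraph (Fin m)) (β : Fin m → ℕ) (g : Fin m → ℤ)
    (v : Fin m) (t : ℤ) : Prop :=
  0 ≤ t ∧
  (∀ u, u < v → ∀ d, IsDelta G β u v d → g u - d + (β v : ℤ) - 1 ≤ t) ∧
  (t = 0 ∨ ∃ u, u < v ∧ ∃ d, IsDelta G β u v d ∧ t = g u - d + (β v : ℤ) - 1)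

/-- `g` is the function `γ`: `γ(v) = 0` for the `≺`-least vertex, and otherwise
`γ(v) = β(v) − 1 + max(0, max_{u ≺ v, δ(u,v) < ∞} (γ(u) − δ(u,v) + β(v) − 1))`. -/
def IsGamma {m : ℕ} (G : SimpleGraph (Fin m)) (β : Fin m → ℕ) (g : Fin m → ℤ) : Prop :=
  ∀ v : Fin m,
    if (v : ℕ) = 0 then g v = 0
    else ∃ t, IsGammaVal G β g v t ∧ g v = (β v : ℤ) - 1 + t

/-- `g` is the function `γ′`:
`γ′(v) = β(v) − 1 + max(0, max_{u ≺ v, δ(u,v) < ∞} (γ′(u) − δ(u,v) + β(v) − 1))`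
(so `γ′(v) = β(v) − 1` for the `≺`-least vertex). -/
def IsGamma' {m : ℕ} (G : SimpleGraph (Fin m)) (β : Fin m → ℕ) (g : Fin m → ℤ) : Prop :=
  ∀ v : Fin m, ∃ t, IsGammaVal G β g v t ∧ g v = (β v : ℤ) - 1 + t

/-! ## The closure sets (F, R⁺, R⁻) for the {2}-CSP(K₄) algorithm -/

mutual
/-- Membership in the closure set `F` of pairs (initialised as the edge set of `G`). -/
inductive InF {m : ℕ} (G : SimpleGraph (Fin m)) : Finset (Fin m) → Prop
  | edge {x y : Fin m} : G.Adj x y → InF G {x, y}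
  | x3a {x y w z : Fin m} : [x, y, w, z].Pairwise (· ≠ ·) →
      x < z → y < z → w < z → ¬(x < w ∧ y < w) →
      InF G {w, z} → InRp G {x, y, z} → InF G {x, w}
  | x3b {x y w z : Fin m} : [x, y, w, z].Pairwise (· ≠ ·) →
      x < z → y < z → w < z → ¬(x < w ∧ y < w) →
      InF G {w, z} → InRp G {x, y, z} → InF G {y, w}
  | x4 {x y w z : Fin m} : [x, y, w, z].Pairwise (· ≠ ·) →
      x < y → w < y → y < z →
      InRp G {x, y, z} → InRm G {w, y, z} → InF G {x, w}
  | x7a {x y q w z : Fin m} : [x, y, q, w, z].Pairwise (· ≠ ·) →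
      x < q → y < q → w < q → q < z → ¬(x < w ∧ y < w) →
      InRp G {x, y, z} → InRm G {w, q, z} → InF G {x, w}
  | x7a' {x y q w z : Fin m} : [x, y, q, w, z].Pairwise (· ≠ ·) →
      x < q → y < q → w < q → q < z → ¬(x < w ∧ y < w) →
      InRm G {x, y, z} → InRp G {w, q, z} → InF G {x, w}
  | x7b {x y q w z : Fin m} : [x, y, q, w, z].Pairwise (· ≠ ·) →
      x < q → y < q → w < q → q < z → ¬(x < w ∧ y < w) →
      InRp G {x, y, z} → InRm G {w, q, z} → InF G {y, w}
  | x7b' {x y q w z : Fin m} : [x, y, q, w, z].Pairwise (· ≠ ·) →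
      x < q → y < q → w < q → q < z → ¬(x < w ∧ y < w) →
      InRm G {x, y, z} → InRp G {w, q, z} → InF G {y, w}

/-- Membership in the closure set `R⁺` of triples. -/
inductive InRp {m : ℕ} (G : SimpleGraph (Fin m)) : Finset (Fin m) → Prop
  | x2 {x y w z : Fin m} : [x, y, w, z].Pairwise (· ≠ ·) →
      x < z → y < z → w < z →
      InF G {w, z} → InRm G {x, y, z} → InRp G {x, y, w}
  | x4 {x y w z : Fin m} : [x, y, w, z].Pairwise (· ≠ ·) →
      x < y → w < y → y < z →
      InRp G {x, y, z} → InRm G {w, y, z} → InRp G {x, y, w}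
  | x5p {x y w z : Fin m} : [x, y, w, z].Pairwise (· ≠ ·) →
      x < z → y < z → w < z →
      InRp G {x, y, z} → InRp G {w, y, z} → InRp G {x, y, w}
  | x5m {x y w z : Fin m} : [x, y, w, z].Pairwise (· ≠ ·) →
      x < z → y < z → w < z →
      InRm G {x, y, z} → InRm G {w, y, z} → InRp G {x, y, w}
  | x6ap {x y q w z : Fin m} : [x, y, q, w, z].Pairwise (· ≠ ·) →
      x < q → y < q → w < q → q < z →
      InRp G {x, y, z} → InRp G {w, q, z} → InRp G {x, y, w}
  | x6am {x y q w z : Fin m} : [x, y, q, w, z].Pairwise (· ≠ ·) →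
      x < q → y < q → w < q → q < z →
      InRm G {x, y, z} → InRm G {w, q, z} → InRp G {x, y, w}
  | x6bp {x y q w z : Fin m} : [x, y, q, w, z].Pairwise (· ≠ ·) →
      x < q → y < q → w < q → q < z →
      InRp G {x, y, z} → InRp G {w, q, z} → InRp G {x, y, q}
  | x6bm {x y q w z : Fin m} : [x, y, q, w, z].Pairwise (· ≠ ·) →
      x < q → y < q → w < q → q < z →
      InRm G {x, y, z} → InRm G {w, q, z} → InRp G {x, y, q}

/-- Membership in the closure set `R⁻` of triples. -/
inductive InRm {m : ℕ} (G : SimpleGraph (Fin m)) : Finset (Fin m) → Prop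
  | x1 {x y z : Fin m} : [x, y, z].Pairwise (· ≠ ·) →
      x < z → y < z →
      InF G {x, z} → InF G {y, z} → InRm G {x, y, z}
  | x3 {x y w z : Fin m} : [x, y, w, z].Pairwise (· ≠ ·) →
      x < z → y < z → w < z → x < w → y < w →
      InF G {w, z} → InRp G {x, y, z} → InRm G {x, y, w}
  | x7a {x y q w z : Fin m} : [x, y, q, w, z].Pairwise (· ≠ ·) →
      x < q → y < q → w < q → q < z →
      InRp G {x, y, z} → InRm G {w, q, z} → InRm G {x, y, q}
  | x7a' {x y q w z : Fin m} : [x, y, q, w, z].Pairwise (· ≠ ·) →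
      x < q → y < q → w < q → q < z →
      InRm G {x, y, z} → InRp G {w, q, z} → InRm G {x, y, q}
  | x7b {x y q w z : Fin m} : [x, y, q, w, z].Pairwise (· ≠ ·) →
      x < q → y < q → w < q → q < z → x < w → y < w →
      InRp G {x, y, z} → InRm G {w, q, z} → InRm G {x, y, w}
  | x7b' {x y q w z : Fin m} : [x, y, q, w, z].Pairwise (· ≠ ·) →
      x < q → y < q → w < q → q < z → x < w → y < w →
      InRm G {x, y, z} → InRp G {w, q, z} → InRm G {x, y, w}
end


-- ## Auxiliary lemmas for Statement 2

lemma concat_inj' {α : Type*} {L M : List α} {a b : α} (h : L ++ [a] = M ++ [b]) :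
    L = M ∧ a = b := by
  have h2 := congrArg List.reverse h
  simp at h2
  exact ⟨h2.2, h2.1⟩

lemma walk_shape {m : ℕ} {G : SimpleGraph (Fin m)} {Q : List (Fin m)}
    (h : IsLoopingWalk G Q) : ∃ x L z, Q = x :: (L ++ [z]) := by
  cases h with
  | base h => exact ⟨_, [], _, rfl⟩
  | @comb x y z Q₁ Q₂ _ _ _ _ => exact ⟨x, Q₁ ++ y :: Q₂, z, by simp⟩

lemma interior_gt {m : ℕ} {G : SimpleGraph (Fin m)} {Q : List (Fin m)}
    (h : IsLoopingWalk G Q) {x z : Fin m} {L : List (Fin m)}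
    (hQ : Q = x :: (L ++ [z])) : ∀ a ∈ L, x < a ∧ z < a := by
  cases h with
  | base hadj =>
      cases L with
      | nil => simp
      | cons c t => simp at hQ
  | @comb x0 y z0 Q₁ Q₂ h1 h2 hxz hw =>
      injection hQ with hx hrest
      rw [show Q₁ ++ y :: Q₂ ++ [z0] = (Q₁ ++ y :: Q₂) ++ [z0] by simp] at hrest
      obtain ⟨hL, hz⟩ := concat_inj' hrest
      subst hx; subst hz; subst hL
      exact hw

lemma lamWalk_shape {m : ℕ} (β : Fin m → ℕ) (x z : Fin m) (L : List (Fin m)) :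
    lamWalk β (x :: (L ++ [z])) =
      ((L.length : ℤ) + 1) - 2 * (L.map (fun a => (β a : ℤ) - 1)).sum := by
  have : (x :: (L ++ [z])) = (x :: L) ++ [z] := by simp
  simp [lamWalk, List.dropLast_concat]

lemma looping_reverse {m : ℕ} {G : SimpleGraph (Fin m)} {Q : List (Fin m)}
    (h : IsLoopingWalk G Q) : IsLoopingWalk G Q.reverse := by
  induction h with
  | base h => exact IsLoopingWalk.base h.symm
  | @comb x y z Q₁ Q₂ h1 h2 hxz hw ih1 ih2 =>
      have e1 : (x :: (Q₁ ++ [y])).reverse = y :: (Q₁.reverse ++ [x]) := by simp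
      have e2 : (y :: (Q₂ ++ [z])).reverse = z :: (Q₂.reverse ++ [y]) := by simp
      rw [e1] at ih1; rw [e2] at ih2
      have hc := IsLoopingWalk.comb ih2 ih1 (Ne.symm hxz) (by
        intro a ha
        have hm : a ∈ Q₁ ++ y :: Q₂ := by
          simp at ha ⊢; tauto
        exact ⟨(hw a hm).2, (hw a hm).1⟩)
      have e3 : (x :: (Q₁ ++ y :: Q₂ ++ [z])).reverse
          = z :: (Q₂.reverse ++ y :: Q₁.reverse ++ [x]) := by simp
      rw [e3]; exact hc

lemma walk_length_aux {m : ℕ} {G : SimpleGraph (Fin m)} {Q : List (Fin m)}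
    (h : IsLoopingWalk G Q) :
    ∀ x : Fin m, ∀ L : List (Fin m), ∀ z : Fin m, Q = x :: (L ++ [z]) →
      Q.length ≤ 2 ^ (Finset.univ.filter (fun a => x < a ∧ z < a)).card + 1 := by
  induction h with
  | base hadj =>
      intro x L z hQ
      simp only [List.length_cons, List.length_nil]
      have : 1 ≤ 2 ^ (Finset.univ.filter (fun a => x < a ∧ z < a)).card :=
        Nat.one_le_two_pow
      omega
  | @comb x0 y z0 Q₁ Q₂ h1 h2 hxz hw ih1 ih2 =>
      intro x L z hQ
      injection hQ with hx hrest
      rw [show Q₁ ++ y :: Q₂ ++ [z0] = (Q₁ ++ y :: Q₂) ++ [z0] by simp] at hrest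
      obtain ⟨hL, hz⟩ := concat_inj' hrest
      subst hx; subst hz
      set S := Finset.univ.filter (fun a => x0 < a ∧ z0 < a) with hS
      have hyS : y ∈ S := by
        have := hw y (by simp)
        simp [hS, this.1, this.2]
      have hxy : x0 < y := (hw y (by simp)).1
      have hzy : z0 < y := (hw y (by simp)).2
      have hsub1 : Finset.univ.filter (fun a => x0 < a ∧ y < a) ⊆ S.erase y := by
        intro a ha
        simp only [Finset.mem_filter, Finset.mem_univ, true_and] at ha
        simp [Finset.mem_erase, hS, ha.1, hzy.trans ha.2, (hzy.trans ha.2).ne',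
          ha.2.ne']
      have hsub2 : Finset.univ.filter (fun a => y < a ∧ z0 < a) ⊆ S.erase y := by
        intro a ha
        simp only [Finset.mem_filter, Finset.mem_univ, true_and] at ha
        simp [Finset.mem_erase, hS, ha.2, hxy.trans ha.1, ha.1.ne']
      have hce : (S.erase y).card = S.card - 1 := Finset.card_erase_of_mem hyS
      have hS1 : S.card ≥ 1 := Finset.card_pos.mpr ⟨y, hyS⟩
      have hb1 := ih1 x0 Q₁ y rfl
      have hb2 := ih2 y Q₂ z0 rfl
      have hc1 : (Finset.univ.filter (fun a => x0 < a ∧ y < a)).card ≤ S.card - 1 := by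
        have := Finset.card_le_card hsub1; omega
      have hc2 : (Finset.univ.filter (fun a => y < a ∧ z0 < a)).card ≤ S.card - 1 := by
        have := Finset.card_le_card hsub2; omega
      have hp1 : 2 ^ (Finset.univ.filter (fun a => x0 < a ∧ y < a)).card
          ≤ 2 ^ (S.card - 1) := Nat.pow_le_pow_right (by norm_num) hc1
      have hp2 : 2 ^ (Finset.univ.filter (fun a => y < a ∧ z0 < a)).card
          ≤ 2 ^ (S.card - 1) := Nat.pow_le_pow_right (by norm_num) hc2
      have hpow : 2 ^ (S.card - 1) + 2 ^ (S.card - 1) = 2 ^ S.card := by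
        rw [← two_mul, ← pow_succ']
        congr 1
        omega
      simp only [List.length_cons, List.length_append] at hb1 hb2 ⊢
      omega

lemma walk_length_le {m : ℕ} {G : SimpleGraph (Fin m)} {Q : List (Fin m)}
    (h : IsLoopingWalk G Q) : Q.length ≤ 2 ^ m + 1 := by
  obtain ⟨x, L, z, hQ⟩ := walk_shape h
  have hb := walk_length_aux h x L z hQ
  have hcard : (Finset.univ.filter (fun a => x < a ∧ z < a)).card ≤ m := by
    have := Finset.card_filter_le (Finset.univ : Finset (Fin m)) (fun a => x < a ∧ z < a)
    simpa using this
  have := Nat.pow_le_pow_right (show 1 ≤ 2 by norm_num) hcard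
  omega

lemma lamWalk_lb {m : ℕ} (β : Fin m → ℕ) (hβ : ∀ v, β v = 1 ∨ β v = 2)
    {G : SimpleGraph (Fin m)} {Q : List (Fin m)} (h : IsLoopingWalk G Q) :
    -((2:ℤ) ^ m) - 2 ≤ lamWalk β Q := by
  obtain ⟨x, L, z, rfl⟩ := walk_shape h
  rw [lamWalk_shape]
  have hs : (L.map (fun a => (β a : ℤ) - 1)).sum ≤ (L.map (fun a => (β a : ℤ) - 1)).length • (1:ℤ) := by
    apply List.sum_le_card_nsmul
    intro b hb
    simp only [List.mem_map] at hb
    obtain ⟨a, _, rfl⟩ := hb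
    rcases hβ a with h | h <;> simp [h]
  simp only [List.length_map, nsmul_eq_mul, mul_one] at hs
  have hlen : L.length + 2 ≤ 2 ^ m + 1 := by
    have := walk_length_le h
    simpa using this
  have hcast : (L.length : ℤ) ≤ (2:ℤ) ^ m - 1 := by
    have : (L.length : ℤ) + 2 ≤ (2:ℤ) ^ m + 1 := by exact_mod_cast hlen
    linarith
  linarith

lemma between_normalize {m : ℕ} (β : Fin m → ℕ) {G : SimpleGraph (Fin m)} {a b : Fin m}
    {Q : List (Fin m)} (h : LoopingWalkBetween G a b Q) :
    ∃ L, IsLoopingWalk G (a :: (L ++ [b])) ∧ lamWalk β (a :: (L ++ [b])) = lamWalk β Q := by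
  obtain ⟨hw, hdir | hdir⟩ := h
  · obtain ⟨x, L, z, rfl⟩ := walk_shape hw
    have hx : x = a := by simpa using hdir.1
    have hz : z = b := by
      have hg : (x :: (L ++ [z])).getLast? = some z := by
        rw [show x :: (L ++ [z]) = (x :: L) ++ [z] by simp, List.getLast?_concat]
      rw [hg] at hdir
      exact Option.some_inj.mp hdir.2
    subst hx; subst hz
    exact ⟨L, hw, rfl⟩
  · obtain ⟨x, L, z, rfl⟩ := walk_shape hw
    have hx : x = b := by simpa using hdir.1
    have hz : z = a := by
      have hg : (x :: (L ++ [z])).getLast? = some z := by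
        rw [show x :: (L ++ [z]) = (x :: L) ++ [z] by simp, List.getLast?_concat]
      rw [hg] at hdir
      exact Option.some_inj.mp hdir.2
    subst hx; subst hz
    refine ⟨L.reverse, ?_, ?_⟩
    · have hr := looping_reverse hw
      have e : (x :: (L ++ [z])).reverse = z :: (L.reverse ++ [x]) := by simp
      rwa [e] at hr
    · rw [lamWalk_shape, lamWalk_shape]
      simp [List.sum_reverse]

/-- If `u ≠ v`, `u ≺ w`, `v ≺ w` and `δ(u,w)`, `δ(v,w)` are finite (with
values `d₁`, `d₂`), then `δ(u,v)` is finite and `δ(u,v) ≤ δ(u,w) + δ(v,w) − 2β(w) + 2`.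
(If `δ(u,w) = ∞` or `δ(v,w) = ∞` the claimed inequality holds trivially, which corresponds
here to the hypotheses `IsDelta G β u w d₁`, `IsDelta G β v w d₂` being unsatisfiable.) -/
theorem delta_triangle {m : ℕ} (β : Fin m → ℕ) (hβ : ∀ v, β v = 1 ∨ β v = 2)
    (G : SimpleGraph (Fin m)) (u v w : Fin m) (huv : u ≠ v) (huw : u < w) (hvw : v < w)
    (d₁ d₂ : ℤ) (h₁ : IsDelta G β u w d₁) (h₂ : IsDelta G β v w d₂) :
    ∃ d : ℤ, IsDelta G β u v d ∧ d ≤ d₁ + d₂ - 2 * (β w : ℤ) + 2 := by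

  obtain ⟨⟨Qa, hba, hda⟩, _⟩ := h₁
  obtain ⟨⟨Qb, hbb, hdb⟩, _⟩ := h₂
  obtain ⟨L₁, hW₁, hl₁⟩ := between_normalize β hba
  have hbb' : LoopingWalkBetween G w v Qb := ⟨hbb.1, hbb.2.symm⟩
  obtain ⟨L₂, hW₂, hl₂⟩ := between_normalize β hbb'
  -- combine
  have hint : ∀ a ∈ L₁ ++ w :: L₂, u < a ∧ v < a := by
    intro a ha
    rcases List.mem_append.mp ha with ha | ha
    · have := interior_gt hW₁ rfl a ha
      exact ⟨this.1, hvw.trans this.2⟩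
    · rcases List.mem_cons.mp ha with rfl | ha
      · exact ⟨huw, hvw⟩
      · have := interior_gt hW₂ rfl a ha
        exact ⟨huw.trans this.1, this.2⟩
  have hcomb := IsLoopingWalk.comb hW₁ hW₂ huv hint
  set W : List (Fin m) := u :: (L₁ ++ w :: L₂ ++ [v]) with hWdef
  have hbW : LoopingWalkBetween G u v W := by
    refine ⟨hcomb, Or.inl ⟨rfl, ?_⟩⟩
    rw [show W = (u :: (L₁ ++ w :: L₂)) ++ [v] by simp [hWdef], List.getLast?_concat]
  have hlamW : lamWalk β W = d₁ + d₂ - 2 * (β w : ℤ) + 2 := by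
    have e : W = u :: ((L₁ ++ w :: L₂) ++ [v]) := by simp [hWdef]
    rw [e, lamWalk_shape]
    have e1 : lamWalk β (u :: (L₁ ++ [w])) =
        ((L₁.length : ℤ) + 1) - 2 * (L₁.map (fun a => (β a : ℤ) - 1)).sum :=
      lamWalk_shape β u w L₁
    have e2 : lamWalk β (w :: (L₂ ++ [v])) =
        ((L₂.length : ℤ) + 1) - 2 * (L₂.map (fun a => (β a : ℤ) - 1)).sum :=
      lamWalk_shape β w v L₂
    rw [hl₁, hda] at e1
    rw [hl₂, hdb] at e2
    simp only [List.map_append, List.map_cons, List.sum_append, List.sum_cons,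
      List.length_append, List.length_cons]
    push_cast
    linarith
  -- minimum exists
  have hbdd : ∃ b : ℤ, ∀ d : ℤ,
      (∃ Q, LoopingWalkBetween G u v Q ∧ lamWalk β Q = d) → b ≤ d := by
    refine ⟨-((2:ℤ) ^ m) - 2, ?_⟩
    rintro d ⟨Q, hQ, rfl⟩
    exact lamWalk_lb β hβ hQ.1
  have hinh : ∃ d : ℤ, ∃ Q, LoopingWalkBetween G u v Q ∧ lamWalk β Q = d :=
    ⟨lamWalk β W, W, hbW, rfl⟩
  obtain ⟨lb, hlb, hmin⟩ := Int.exists_least_of_bdd hbdd hinh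
  refine ⟨lb, ⟨hlb, ?_⟩, ?_⟩
  · intro Q hQ
    exact hmin (lamWalk β Q) ⟨Q, hQ, rfl⟩
  · have := hmin (lamWalk β W) ⟨W, hbW, rfl⟩
    rw [hlamW] at this
    exact this

end CountingCSP
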